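/- Every frame function on the set of effects in d dimensions is continuous (with respect to the Hilbert–Schmidt norm) on the entire set of effects. -/

import Mathlib

open Matrix Finset ComplexOrder

def IsEffect {d : ℕ} (E : Matrix (Fin d) (Fin d) ℂ) : Prop :=
  E.PosSemidef ∧ (1 - E).PosSemidef

def IsFrameFunction {d : ℕ} (f : Matrix (Fin d) (Fin d) ℂ → ℝ) : Prop :=
  (∀ E, IsEffect E → f E ∈ Set.Icc (0 : ℝ) 1) ∧
  ∀ (n : ℕ) (E : Fin n → Matrix (Fin d) (Fin d) ℂ),
    (∀ j, IsEffect (E j)) → (∑ j, E j = 1) → ∑ j, f (E j) = 1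

noncomputable def hsNorm {d : ℕ} (A : Matrix (Fin d) (Fin d) ℂ) : ℝ :=
  Real.sqrt ((Aᴴ * A).trace.re)

def IsProjection {d : ℕ} (P : Matrix (Fin d) (Fin d) ℂ) : Prop :=
  P.IsHermitian ∧ P * P = P

/-!
Additivity of `f` on effects makes it monotone, gives `f (E / 2) = f E / 2`, and the POVM of `k`
copies of `k⁻¹ • 1` gives `f (k⁻¹ • 1) = k⁻¹`. If `hsNorm (E - E₀) ≤ c`, every eigenvalue of the
Hermitian matrix `E - E₀` lies in `[-c, c]`, so `E - E₀ = 2 (P - N)` with `P, N ≥ 0` and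
`P + N = (c / 2) • 1`. Halving keeps `E / 2 + N = E₀ / 2 + P` an effect, and additivity there gives
`f E / 2 ≤ f E₀ / 2 + f P ≤ f E₀ / 2 + c / 2`. Exchanging `E` and `E₀` bounds `|f E - f E₀|` by `c`.
-/

open scoped MatrixOrder

lemma Matrix.IsHermitian.trace_mul_self {𝕜 n : Type*} [RCLike 𝕜] [Fintype n] [DecidableEq n]
    {A : Matrix n n 𝕜} (hA : A.IsHermitian) :
    (A * A).trace = ∑ i, ((hA.eigenvalues i ^ 2 : ℝ) : 𝕜) := by
  conv_lhs => rw [hA.spectral_theorem, ← map_mul, Unitary.conjStarAlgAut_apply, trace_mul_cycle,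
    Unitary.coe_star_mul_self, one_mul, diagonal_mul_diagonal, trace_diagonal]
  simp [sq]

lemma Matrix.IsHermitian.le_smul_one_of_eigenvalues_le {𝕜 n : Type*} [RCLike 𝕜] [Fintype n]
    [DecidableEq n] {A : Matrix n n 𝕜} (hA : A.IsHermitian) {c : ℝ}
    (h : ∀ i, hA.eigenvalues i ≤ c) : A ≤ c • 1 := by
  rw [← Algebra.algebraMap_eq_smul_one]
  refine le_algebraMap_of_spectrum_le (fun x hx => ?_) hA.isSelfAdjoint
  obtain ⟨i, rfl⟩ := hA.spectrum_real_eq_range_eigenvalues ▸ hx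
  exact h i

section HilbertSchmidt

variable {d : ℕ}

lemma hsNorm_neg (A : Matrix (Fin d) (Fin d) ℂ) : hsNorm (-A) = hsNorm A := by
  simp [hsNorm]

lemma hsNorm_sub_comm (A B : Matrix (Fin d) (Fin d) ℂ) : hsNorm (A - B) = hsNorm (B - A) := by
  rw [← hsNorm_neg, neg_sub]

lemma Matrix.IsHermitian.abs_eigenvalues_le_hsNorm {A : Matrix (Fin d) (Fin d) ℂ}
    (hA : A.IsHermitian) (i : Fin d) : |hA.eigenvalues i| ≤ hsNorm A := by
  have htrace : (Aᴴ * A).trace.re = ∑ j, hA.eigenvalues j ^ 2 := by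
    rw [hA.eq, hA.trace_mul_self, Complex.re_sum]
    exact sum_congr rfl fun j _ => Complex.ofReal_re _
  rw [hsNorm, htrace, ← Real.sqrt_sq_eq_abs]
  exact Real.sqrt_le_sqrt <|
    single_le_sum (f := fun j => hA.eigenvalues j ^ 2) (fun j _ => sq_nonneg _) (mem_univ i)

lemma Matrix.IsHermitian.le_hsNorm_smul_one {A : Matrix (Fin d) (Fin d) ℂ}
    (hA : A.IsHermitian) : A ≤ hsNorm A • 1 :=
  hA.le_smul_one_of_eigenvalues_le fun i =>
    (le_abs_self _).trans (hA.abs_eigenvalues_le_hsNorm i)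

end HilbertSchmidt

section Effects

variable {d : ℕ} {E : Matrix (Fin d) (Fin d) ℂ}

lemma isEffect_iff : IsEffect E ↔ 0 ≤ E ∧ E ≤ 1 := by
  rw [IsEffect, Matrix.nonneg_iff_posSemidef, Matrix.le_iff]

lemma isEffect_one : IsEffect (1 : Matrix (Fin d) (Fin d) ℂ) :=
  isEffect_iff.2 ⟨zero_le_one, le_rfl⟩

lemma IsEffect.smul (hE : IsEffect E) {t : ℝ} (h0 : 0 ≤ t) (h1 : t ≤ 1) : IsEffect (t • E) := by
  obtain ⟨hE0, hE1⟩ := isEffect_iff.1 hE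
  refine isEffect_iff.2 ⟨smul_nonneg h0 hE0, ?_⟩
  calc t • E ≤ t • 1 := smul_le_smul_of_nonneg_left hE1 h0
    _ ≤ (1 : ℝ) • 1 := smul_le_smul_of_nonneg_right h1 zero_le_one
    _ = 1 := one_smul _ _

lemma IsEffect.compl (hE : IsEffect E) : IsEffect (1 - E) := by
  obtain ⟨hE0, hE1⟩ := isEffect_iff.1 hE
  exact isEffect_iff.2 ⟨sub_nonneg.2 hE1, sub_le_self _ hE0⟩

end Effects

namespace IsFrameFunction

variable {d : ℕ} {f : Matrix (Fin d) (Fin d) ℂ → ℝ} {A B E E₀ : Matrix (Fin d) (Fin d) ℂ}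

lemma nonneg (hf : IsFrameFunction f) (hE : IsEffect E) : 0 ≤ f E := (hf.1 E hE).1

lemma map_add (hf : IsFrameFunction f) (hA : IsEffect A) (hB : IsEffect B)
    (hAB : IsEffect (A + B)) : f (A + B) = f A + f B := by
  have h₃ := hf.2 3 ![A, B, 1 - (A + B)] (fun j => by fin_cases j <;> simp [hA, hB, hAB.compl])
    (by simp [Fin.sum_univ_three])
  have h₂ := hf.2 2 ![A + B, 1 - (A + B)] (fun j => by fin_cases j <;> simp [hAB, hAB.compl])
    (by simp [Fin.sum_univ_two])
  simp [Fin.sum_univ_three, Fin.sum_univ_two] at h₃ h₂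
  linarith

lemma mono (hf : IsFrameFunction f) (hA : IsEffect A) (hB : IsEffect B) (hAB : A ≤ B) :
    f A ≤ f B := by
  have hBA : IsEffect (B - A) := isEffect_iff.2
    ⟨sub_nonneg.2 hAB, (sub_le_self _ (isEffect_iff.1 hA).1).trans (isEffect_iff.1 hB).2⟩
  have h := hf.map_add hA hBA (by rwa [add_sub_cancel])
  rw [add_sub_cancel] at h
  linarith [hf.nonneg hBA]

lemma map_inv_natCast_smul_one (hf : IsFrameFunction f) {k : ℕ} (hk : k ≠ 0) :
    f ((k : ℝ)⁻¹ • 1) = (k : ℝ)⁻¹ := by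
  have hk' : (k : ℝ) ≠ 0 := Nat.cast_ne_zero.2 hk
  have hk₁ : (1 : ℝ) ≤ k := mod_cast Nat.one_le_iff_ne_zero.2 hk
  have h := hf.2 k (fun _ => (k : ℝ)⁻¹ • 1)
    (fun _ => isEffect_one.smul (by positivity) (inv_le_one_of_one_le₀ hk₁))
    (by simp [← Nat.cast_smul_eq_nsmul ℝ, smul_smul, hk'])
  simp only [sum_const, card_univ, Fintype.card_fin, nsmul_eq_mul] at h
  exact eq_inv_of_mul_eq_one_right h

lemma map_half_smul (hf : IsFrameFunction f) (hE : IsEffect E) :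
    f ((2 : ℝ)⁻¹ • E) = f E / 2 := by
  have hhalf : IsEffect ((2 : ℝ)⁻¹ • E) := hE.smul (by norm_num) (by norm_num)
  have hsum : (2 : ℝ)⁻¹ • E + (2 : ℝ)⁻¹ • E = E := by module
  have h := hf.map_add hhalf hhalf (by rwa [hsum])
  rw [hsum] at h
  linarith

lemma le_add_two_mul_of_sub_eq (hf : IsFrameFunction f) (hE : IsEffect E) (hE₀ : IsEffect E₀)
    {P N : Matrix (Fin d) (Fin d) ℂ} (hP : 0 ≤ P) (hN : 0 ≤ N) {s : ℝ} (hs : s ≤ 2⁻¹)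
    (hPN : P + N = s • 1) (hD : E - E₀ = (2 : ℝ) • (P - N)) :
    f E ≤ f E₀ + 2 * f (s • 1) := by
  have hs₁ : s • (1 : Matrix (Fin d) (Fin d) ℂ) ≤ (2 : ℝ)⁻¹ • 1 :=
    smul_le_smul_of_nonneg_right hs zero_le_one
  have hs₂ : s • (1 : Matrix (Fin d) (Fin d) ℂ) ≤ 1 :=
    hs₁.trans (isEffect_iff.1 (isEffect_one.smul (by norm_num) (by norm_num))).2
  have hP_le : P ≤ s • 1 := hPN ▸ le_add_of_nonneg_right hN
  have hN_le : N ≤ s • 1 := hPN ▸ le_add_of_nonneg_left hP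
  have hS : IsEffect (s • (1 : Matrix (Fin d) (Fin d) ℂ)) :=
    isEffect_iff.2 ⟨hPN ▸ add_nonneg hP hN, hs₂⟩
  have hP' : IsEffect P := isEffect_iff.2 ⟨hP, hP_le.trans hs₂⟩
  have hN' : IsEffect N := isEffect_iff.2 ⟨hN, hN_le.trans hs₂⟩
  have hE' : IsEffect ((2 : ℝ)⁻¹ • E) := hE.smul (by norm_num) (by norm_num)
  have hE₀' : IsEffect ((2 : ℝ)⁻¹ • E₀) := hE₀.smul (by norm_num) (by norm_num)
  have hX : (2 : ℝ)⁻¹ • E + N = (2 : ℝ)⁻¹ • E₀ + P := by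
    linear_combination (norm := module) (2 : ℝ)⁻¹ • hD
  have hX' : IsEffect ((2 : ℝ)⁻¹ • E₀ + P) := by
    refine isEffect_iff.2 ⟨add_nonneg (isEffect_iff.1 hE₀').1 hP, ?_⟩
    calc (2 : ℝ)⁻¹ • E₀ + P ≤ (2 : ℝ)⁻¹ • 1 + (2 : ℝ)⁻¹ • 1 :=
          add_le_add (smul_le_smul_of_nonneg_left (isEffect_iff.1 hE₀).2 (by norm_num))
            (hP_le.trans hs₁)
      _ = 1 := by module
  have h := hf.map_add hE' hN' (hX ▸ hX')
  rw [hX, hf.map_add hE₀' hP' hX', hf.map_half_smul hE, hf.map_half_smul hE₀] at h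
  linarith [hf.nonneg hN', hf.mono hP' hS hP_le]

lemma le_add_inv_of_hsNorm_le (hf : IsFrameFunction f) (hE : IsEffect E) (hE₀ : IsEffect E₀)
    {k : ℕ} (hk : k ≠ 0) (h : hsNorm (E - E₀) ≤ (k : ℝ)⁻¹) : f E ≤ f E₀ + (k : ℝ)⁻¹ := by
  have hD : (E - E₀).IsHermitian := hE.1.1.sub hE₀.1.1
  have hup : E - E₀ ≤ (k : ℝ)⁻¹ • 1 :=
    hD.le_hsNorm_smul_one.trans (smul_le_smul_of_nonneg_right h zero_le_one)
  have hlow : -(E - E₀) ≤ (k : ℝ)⁻¹ • 1 := by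
    refine hD.neg.le_hsNorm_smul_one.trans ?_
    rw [hsNorm_neg]
    exact smul_le_smul_of_nonneg_right h zero_le_one
  have hs : ((2 * k : ℕ) : ℝ)⁻¹ ≤ 2⁻¹ := by
    gcongr
    exact_mod_cast Nat.le_mul_of_pos_right 2 (Nat.pos_of_ne_zero hk)
  have key := hf.le_add_two_mul_of_sub_eq hE hE₀
    (smul_nonneg (by norm_num : (0 : ℝ) ≤ 4⁻¹) (neg_le_iff_add_nonneg.1 hlow))
    (smul_nonneg (by norm_num : (0 : ℝ) ≤ 4⁻¹) (sub_nonneg.2 hup)) hs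
    (by push_cast; module) (by module)
  rw [hf.map_inv_natCast_smul_one (by positivity)] at key
  have h2k : 2 * ((2 * k : ℕ) : ℝ)⁻¹ = (k : ℝ)⁻¹ := by push_cast; ring
  linarith

end IsFrameFunction

theorem frame_function_continuous {d : ℕ}
    (f : Matrix (Fin d) (Fin d) ℂ → ℝ) (hf : IsFrameFunction f) :
    ∀ E₀ : Matrix (Fin d) (Fin d) ℂ, IsEffect E₀ →
      ∀ ε > (0 : ℝ), ∃ δ > (0 : ℝ),
        ∀ E : Matrix (Fin d) (Fin d) ℂ, IsEffect E →
          hsNorm (E - E₀) < δ → |f E - f E₀| < ε := by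
  intro E₀ hE₀ ε hε
  obtain ⟨k, hk⟩ := exists_nat_one_div_lt hε
  refine ⟨((k + 1 : ℕ) : ℝ)⁻¹, by positivity, fun E hE hδ => ?_⟩
  have h₁ := hf.le_add_inv_of_hsNorm_le hE hE₀ k.succ_ne_zero hδ.le
  have h₂ := hf.le_add_inv_of_hsNorm_le hE₀ hE k.succ_ne_zero
    ((hsNorm_sub_comm E₀ E).trans_lt hδ).le
  rw [one_div] at hk
  push_cast at h₁ h₂
  rw [abs_sub_lt_iff]
  constructor <;> linarith
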